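/- arXiv:2202.08642 — 5 statements merged into one kernel-verified Lean document; each statement's English description precedes it below -/
import Mathlib

section
/- The projective distance dist(x,y) = ‖x ∧ y‖/(‖x‖·‖y‖) between nonzero vectors of a finite-dimensional inner product space satisfies the triangle inequality: dist(x₁,x₃) ≤ dist(x₁,x₂) + dist(x₂,x₃). -/
/-- The Gram determinant `det (⟪x i, y j⟫)` of two `m`-tuples of vectors.
For pure wedge products `X = x₁ ∧ ⋯ ∧ xₘ` and `Y = y₁ ∧ ⋯ ∧ yₘ` this is the
inner product `⟪X, Y⟫` in `⋀ᵐ U`, for the inner product on `⋀ᵐ U` making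
wedge products of orthonormal vectors orthonormal. -/
noncomputable def gramDet (𝕜 : Type*) [RCLike 𝕜] {E : Type*} [NormedAddCommGroup E]
    [InnerProductSpace 𝕜 E] {m : ℕ} (x y : Fin m → E) : 𝕜 :=
  Matrix.det (Matrix.of fun i j => (inner 𝕜 (x i) (y j) : 𝕜))

/-- The norm `‖x₁ ∧ ⋯ ∧ xₘ‖` of a pure wedge product, computed as the square
root of the Gram determinant. -/
noncomputable def wedgeNorm (𝕜 : Type*) [RCLike 𝕜] {E : Type*} [NormedAddCommGroup E]
    [InnerProductSpace 𝕜 E] {m : ℕ} (x : Fin m → E) : ℝ :=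
  Real.sqrt (RCLike.re (gramDet 𝕜 x x))

/-- The projective distance `dist(x,y) = ‖x ∧ y‖ / (‖x‖ ‖y‖)` between two
nonzero vectors. -/
noncomputable def pdist (𝕜 : Type*) [RCLike 𝕜] {E : Type*} [NormedAddCommGroup E]
    [InnerProductSpace 𝕜 E] (x y : E) : ℝ :=
  wedgeNorm 𝕜 ![x, y] / (‖x‖ * ‖y‖)

/-- The projective distance between the lines spanned by the pure wedge products
`x₁ ∧ ⋯ ∧ xₘ` and `y₁ ∧ ⋯ ∧ yₘ` in `⋀ᵐ U`:
`dist(X,Y) = ‖X ∧ Y‖/(‖X‖‖Y‖) = √(‖X‖²‖Y‖² − |⟪X,Y⟫|²)/(‖X‖‖Y‖)`.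
When `x`, `y` are bases of `m`-dimensional subspaces `V₁`, `V₂`, this is the
projective distance `dist(V₁,V₂)` (it does not depend on the chosen bases). -/
noncomputable def pdistT (𝕜 : Type*) [RCLike 𝕜] {E : Type*} [NormedAddCommGroup E]
    [InnerProductSpace 𝕜 E] {m : ℕ} (x y : Fin m → E) : ℝ :=
  Real.sqrt (RCLike.re (gramDet 𝕜 x x) * RCLike.re (gramDet 𝕜 y y)
      - ‖gramDet 𝕜 x y‖ ^ 2) / (wedgeNorm 𝕜 x * wedgeNorm 𝕜 y)

/-- The distance `dist(x, V)` from a nonzero point to a subspace: the infimum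
(in fact minimum) of `dist(x,y)` over nonzero `y ∈ V`. -/
noncomputable def pdistPV (𝕜 : Type*) [RCLike 𝕜] {E : Type*} [NormedAddCommGroup E]
    [InnerProductSpace 𝕜 E] (x : E) (V : Submodule 𝕜 E) : ℝ :=
  sInf {d : ℝ | ∃ y ∈ V, y ≠ 0 ∧ d = pdist 𝕜 x y}

/-!
The wedge norm `‖x ∧ y‖` equals `‖x‖ ‖P y‖`, where `P` is the orthogonal projection onto the
complement of the line `𝕜 ∙ x`, so `dist(x, y) = ‖P y‖ / ‖y‖`. Split `x₃` into its component
along `x₂`, of norm at most `‖x₃‖`, and its component orthogonal to `x₂`, of norm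
`‖x₃‖ dist(x₂, x₃)`. Projecting away from `x₁`, the first component contributes at most
`‖x₃‖ dist(x₁, x₂)` (the ratio `‖P v‖ / ‖v‖` is constant on the line through `x₂`) and the second
at most its own norm.
-/

open Submodule

section

variable {𝕜 : Type*} [RCLike 𝕜] {E : Type*} [NormedAddCommGroup E] [InnerProductSpace 𝕜 E]

theorem re_gramDet_fin_two_self (x y : E) :
    RCLike.re (gramDet 𝕜 ![x, y] ![x, y]) = ‖x‖ ^ 2 * ‖y‖ ^ 2 - ‖inner 𝕜 x y‖ ^ 2 := by
  simp only [gramDet, Matrix.det_fin_two, Matrix.of_apply, Matrix.cons_val_zero,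
    Matrix.cons_val_one]
  rw [← inner_conj_symm y x, RCLike.mul_conj, inner_self_eq_norm_sq_to_K,
    inner_self_eq_norm_sq_to_K]
  simp

theorem norm_mul_norm_starProjection_singleton (x y : E) :
    ‖x‖ * ‖(𝕜 ∙ x).starProjection y‖ = ‖inner 𝕜 x y‖ := by
  rcases eq_or_ne x 0 with rfl | hx
  · simp
  have hx' : ‖x‖ ≠ 0 := norm_ne_zero_iff.2 hx
  rw [starProjection_singleton, norm_smul, norm_div, RCLike.norm_ofReal, abs_sq]
  field_simp

theorem wedgeNorm_fin_two (x y : E) :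
    wedgeNorm 𝕜 ![x, y] = ‖x‖ * ‖(𝕜 ∙ x)ᗮ.starProjection y‖ := by
  have pythagoras := norm_sq_eq_add_norm_sq_starProjection y (𝕜 ∙ x)
  have along := norm_mul_norm_starProjection_singleton (𝕜 := 𝕜) x y
  rw [wedgeNorm, re_gramDet_fin_two_self, ← Real.sqrt_sq (by positivity : 0 ≤ ‖x‖ * _)]
  congr 1
  linear_combination (‖x‖ ^ 2) * pythagoras +
    (‖inner 𝕜 x y‖ + ‖x‖ * ‖(𝕜 ∙ x).starProjection y‖) * along

theorem pdist_eq_norm_starProjection_div {x : E} (hx : x ≠ 0) (y : E) :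
    pdist 𝕜 x y = ‖(𝕜 ∙ x)ᗮ.starProjection y‖ / ‖y‖ := by
  rw [pdist, wedgeNorm_fin_two, mul_div_mul_left _ _ (norm_ne_zero_iff.2 hx)]

theorem norm_starProjection_mul_norm_of_mem_span_singleton (K : Submodule 𝕜 E)
    [K.HasOrthogonalProjection] {v y : E} (hv : v ∈ 𝕜 ∙ y) :
    ‖K.starProjection v‖ * ‖y‖ = ‖v‖ * ‖K.starProjection y‖ := by
  obtain ⟨c, rfl⟩ := mem_span_singleton.1 hv
  rw [map_smul, norm_smul, norm_smul]
  ring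

theorem norm_starProjection_mul_norm_le (x y z : E) :
    ‖(𝕜 ∙ x)ᗮ.starProjection z‖ * ‖y‖ ≤
      ‖z‖ * ‖(𝕜 ∙ x)ᗮ.starProjection y‖ + ‖y‖ * ‖(𝕜 ∙ y)ᗮ.starProjection z‖ := by
  set P := (𝕜 ∙ x)ᗮ.starProjection
  set Q := (𝕜 ∙ y).starProjection
  set R := (𝕜 ∙ y)ᗮ.starProjection
  have split : P z = P (Q z) + P (R z) := by
    rw [← map_add, starProjection_add_starProjection_orthogonal]
  have along : ‖P (Q z)‖ * ‖y‖ = ‖Q z‖ * ‖P y‖ :=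
    norm_starProjection_mul_norm_of_mem_span_singleton _ (starProjection_apply_mem _ z)
  calc ‖P z‖ * ‖y‖ ≤ ‖P (Q z)‖ * ‖y‖ + ‖P (R z)‖ * ‖y‖ := by
        rw [split, ← add_mul]; gcongr; exact norm_add_le _ _
    _ ≤ ‖z‖ * ‖P y‖ + ‖y‖ * ‖R z‖ := by
        rw [along, mul_comm _ ‖y‖]
        gcongr
        exacts [norm_starProjection_apply_le _ z, norm_starProjection_apply_le _ _]

end

theorem stmt1_general {𝕜 : Type*} [RCLike 𝕜] {E : Type*} [NormedAddCommGroup E]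
    [InnerProductSpace 𝕜 E]
    (x₁ x₂ x₃ : E) (h₁ : x₁ ≠ 0) (h₂ : x₂ ≠ 0) (h₃ : x₃ ≠ 0) :
    pdist 𝕜 x₁ x₃ ≤ pdist 𝕜 x₁ x₂ + pdist 𝕜 x₂ x₃ := by
  rw [pdist_eq_norm_starProjection_div h₁, pdist_eq_norm_starProjection_div h₁,
    pdist_eq_norm_starProjection_div h₂, div_add_div _ _ (norm_ne_zero_iff.2 h₂)
      (norm_ne_zero_iff.2 h₃), div_le_div_iff₀ (norm_pos_iff.2 h₃) (by positivity)]
  nlinarith [mul_le_mul_of_nonneg_right (norm_starProjection_mul_norm_le (𝕜 := 𝕜) x₁ x₂ x₃)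
    (norm_nonneg x₃)]

/-- the projective distance satisfies the triangle inequality. -/
theorem stmt1 {𝕜 : Type*} [RCLike 𝕜] {E : Type*} [NormedAddCommGroup E]
    [InnerProductSpace 𝕜 E] [FiniteDimensional 𝕜 E]
    (x₁ x₂ x₃ : E) (h₁ : x₁ ≠ 0) (h₂ : x₂ ≠ 0) (h₃ : x₃ ≠ 0) :
    pdist 𝕜 x₁ x₃ ≤ pdist 𝕜 x₁ x₂ + pdist 𝕜 x₂ x₃ :=
  stmt1_general x₁ x₂ x₃ h₁ h₂ h₃
end

section
/- In a non-archimedean normed space where the norm is the maximum norm with respect to some basis, the projective distance satisfies the ultrametric inequality: dist(x₁,x₃) ≤ max{dist(x₁,x₂), dist(x₂,x₃)} for nonzero vectors x₁, x₂, x₃. -/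
open Finset in
private lemma wedge_key {L : Type*} [NontriviallyNormedField L] [IsUltrametricDist L]
    {n : ℕ} (a b c : Fin n → L) (hn : 0 < n) :
    ((univ : Finset (Fin n × Fin n)).sup fun p => ‖a p.1 * c p.2 - a p.2 * c p.1‖₊) * ‖b‖₊
      ≤ max (((univ : Finset (Fin n × Fin n)).sup fun p => ‖a p.1 * b p.2 - a p.2 * b p.1‖₊) * ‖c‖₊)
            (‖a‖₊ * ((univ : Finset (Fin n × Fin n)).sup fun p => ‖b p.1 * c p.2 - b p.2 * c p.1‖₊)) := by
  haveI : Nonempty (Fin n) := ⟨⟨0, hn⟩⟩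
  set W12 := (univ : Finset (Fin n × Fin n)).sup fun p => ‖a p.1 * b p.2 - a p.2 * b p.1‖₊ with hW12
  set W23 := (univ : Finset (Fin n × Fin n)).sup fun p => ‖b p.1 * c p.2 - b p.2 * c p.1‖₊ with hW23
  obtain ⟨p, -, hp⟩ := Finset.exists_mem_eq_sup (univ : Finset (Fin n × Fin n)) univ_nonempty
    (fun p => ‖a p.1 * c p.2 - a p.2 * c p.1‖₊)
  obtain ⟨k, -, hk⟩ := Finset.exists_mem_eq_sup (univ : Finset (Fin n)) univ_nonempty
    (fun i => ‖b i‖₊)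
  rw [hp]
  have hbk : ‖b‖₊ = ‖b k‖₊ := by rw [Pi.nnnorm_def, hk]
  rw [hbk, ← nnnorm_mul]
  obtain ⟨i, j⟩ := p
  have hid : (a i * c j - a j * c i) * b k
      = (c j * (a i * b k - a k * b i) + (-c i) * (a j * b k - a k * b j))
        + a k * (b i * c j - b j * c i) := by ring
  rw [hid]
  refine le_trans (IsUltrametricDist.nnnorm_add_le_max _ _) ?_
  have h12 : ∀ i' j' : Fin n, ‖a i' * b j' - a j' * b i'‖₊ ≤ W12 := fun i' j' =>
    Finset.le_sup (f := fun p : Fin n × Fin n => ‖a p.1 * b p.2 - a p.2 * b p.1‖₊)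
      (mem_univ (i', j'))
  have h23 : ∀ i' j' : Fin n, ‖b i' * c j' - b j' * c i'‖₊ ≤ W23 := fun i' j' =>
    Finset.le_sup (f := fun p : Fin n × Fin n => ‖b p.1 * c p.2 - b p.2 * c p.1‖₊)
      (mem_univ (i', j'))
  have hc : ∀ j' : Fin n, ‖c j'‖₊ ≤ ‖c‖₊ := fun j' => by
    rw [Pi.nnnorm_def]; exact Finset.le_sup (f := fun i => ‖c i‖₊) (mem_univ j')
  have ha : ∀ j' : Fin n, ‖a j'‖₊ ≤ ‖a‖₊ := fun j' => by
    rw [Pi.nnnorm_def]; exact Finset.le_sup (f := fun i => ‖a i‖₊) (mem_univ j')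
  refine max_le (le_trans (IsUltrametricDist.nnnorm_add_le_max _ _) ?_) ?_
  · refine max_le ?_ ?_ <;> refine le_trans ?_ (le_max_left _ _)
    · rw [nnnorm_mul, mul_comm]
      exact mul_le_mul' (h12 i k) (hc j)
    · rw [nnnorm_mul, nnnorm_neg, mul_comm]
      exact mul_le_mul' (h12 j k) (hc i)
  · refine le_trans ?_ (le_max_right _ _)
    rw [nnnorm_mul]
    exact mul_le_mul' (ha k) (h23 i j)



/-- The norm `‖x ∧ y‖` on `⋀² Lⁿ` for a non-archimedean field `L`: the maximum
of the absolute values of the Plücker coordinates `xᵢyⱼ − xⱼyᵢ`. -/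
noncomputable def wedgeNormNA {L : Type*} [NontriviallyNormedField L] {n : ℕ}
    (x y : Fin n → L) : ℝ :=
  ((Finset.univ : Finset (Fin n × Fin n)).sup
    fun p => ‖x p.1 * y p.2 - x p.2 * y p.1‖₊ : NNReal)

/-- The projective distance `dist(x,y) = ‖x ∧ y‖/(‖x‖·‖y‖)` between nonzero
vectors of `Lⁿ`; here `Lⁿ` carries the maximum norm (the `Pi` sup norm), whose
unit ball is `Oⁿ`. -/
noncomputable def pdistNA {L : Type*} [NontriviallyNormedField L] {n : ℕ}
    (x y : Fin n → L) : ℝ :=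
  wedgeNormNA x y / (‖x‖ * ‖y‖)

/-- over a complete non-archimedean valued field `L` with discrete
valuation group, the projective distance on `Lⁿ` (with the maximum norm)
satisfies the ultrametric inequality
`dist(x₁,x₃) ≤ max{dist(x₁,x₂), dist(x₂,x₃)}`. -/
theorem stmt2 {L : Type*} [NontriviallyNormedField L] [IsUltrametricDist L]
    [CompleteSpace L]
    (hdiscrete : ∃ r : ℝ, 0 < r ∧ r < 1 ∧ ∀ z : L, z ≠ 0 → ∃ m : ℤ, ‖z‖ = r ^ m)
    {n : ℕ} (x₁ x₂ x₃ : Fin n → L)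
    (h₁ : x₁ ≠ 0) (h₂ : x₂ ≠ 0) (h₃ : x₃ ≠ 0) :
    pdistNA x₁ x₃ ≤ max (pdistNA x₁ x₂) (pdistNA x₂ x₃) := by
  rcases Nat.eq_zero_or_pos n with hn | hn
  · subst hn
    exact absurd (Subsingleton.elim x₁ 0) h₁
  have hA : (0:ℝ) < ‖x₁‖ := norm_pos_iff.mpr h₁
  have hB : (0:ℝ) < ‖x₂‖ := norm_pos_iff.mpr h₂
  have hC : (0:ℝ) < ‖x₃‖ := norm_pos_iff.mpr h₃
  have key := wedge_key x₁ x₂ x₃ hn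
  have keyR : wedgeNormNA x₁ x₃ * ‖x₂‖ ≤
      max (wedgeNormNA x₁ x₂ * ‖x₃‖) (‖x₁‖ * wedgeNormNA x₂ x₃) := by
    have := NNReal.coe_le_coe.mpr key
    push_cast at this
    simpa [wedgeNormNA, coe_nnnorm] using this
  have hD : (0:ℝ) < ‖x₁‖ * ‖x₂‖ * ‖x₃‖ := by positivity
  calc pdistNA x₁ x₃ = wedgeNormNA x₁ x₃ * ‖x₂‖ / (‖x₁‖ * ‖x₂‖ * ‖x₃‖) := by
        unfold pdistNA; field_simp
    _ ≤ max (wedgeNormNA x₁ x₂ * ‖x₃‖) (‖x₁‖ * wedgeNormNA x₂ x₃) / (‖x₁‖ * ‖x₂‖ * ‖x₃‖) :=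
        (div_le_div_iff_of_pos_right hD).mpr keyR
    _ = max (wedgeNormNA x₁ x₂ * ‖x₃‖ / (‖x₁‖ * ‖x₂‖ * ‖x₃‖))
            (‖x₁‖ * wedgeNormNA x₂ x₃ / (‖x₁‖ * ‖x₂‖ * ‖x₃‖)) :=
        (max_div_div_right hD.le _ _).symm
    _ = max (pdistNA x₁ x₂) (pdistNA x₂ x₃) := by
        unfold pdistNA
        congr 1 <;> field_simp <;> ring
end

section
/- Let V be a nonzero subspace of a finite-dimensional inner product space U and let x ∈ U be nonzero. Write x = w + v with w orthogonal to V and v ∈ V. Then the minimum of dist(x,y) over nonzero y ∈ V equals ‖w‖/‖x‖. -/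
/-!
For `y ∈ V` the component `w` of `x` orthogonal to `V` does not contribute to `⟪x, y⟫`, so
Pythagoras splits the Gram determinant of `x, y` as
`‖x‖²‖y‖² - |⟪x,y⟫|² = ‖w‖²‖y‖² + (‖v‖²‖y‖² - |⟪v,y⟫|²)`.
The bracket is the Cauchy–Schwarz defect of `v` and `y`: it is nonnegative, which gives
`dist(x,y) ≥ ‖w‖/‖x‖`, and it vanishes for `y = v` (or for every `y` when `v = 0`).
-/

section

variable {𝕜 : Type*} [RCLike 𝕜] {E : Type*} [NormedAddCommGroup E] [InnerProductSpace 𝕜 E]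

theorem pdist_eq_sqrt (x y : E) :
    pdist 𝕜 x y = √(‖x‖ ^ 2 * ‖y‖ ^ 2 - ‖(inner 𝕜 x y : 𝕜)‖ ^ 2) / (‖x‖ * ‖y‖) := by
  have hgram : gramDet 𝕜 ![x, y] ![x, y]
      = ((‖x‖ ^ 2 * ‖y‖ ^ 2 - ‖(inner 𝕜 x y : 𝕜)‖ ^ 2 : ℝ) : 𝕜) := by
    simp only [gramDet, Matrix.det_fin_two, Matrix.of_apply, Matrix.cons_val_zero,
      Matrix.cons_val_one]
    rw [inner_self_eq_norm_sq_to_K, inner_self_eq_norm_sq_to_K, ← inner_conj_symm x y,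
      RCLike.conj_mul, RCLike.norm_conj]
    push_cast
    ring
  rw [pdist, wedgeNorm, hgram, RCLike.ofReal_re]

theorem norm_add_sq_mul_sub_norm_inner_sq {w v y : E} (hwv : inner 𝕜 w v = 0)
    (hwy : inner 𝕜 w y = 0) :
    ‖w + v‖ ^ 2 * ‖y‖ ^ 2 - ‖(inner 𝕜 (w + v) y : 𝕜)‖ ^ 2
      = ‖w‖ ^ 2 * ‖y‖ ^ 2 + (‖v‖ ^ 2 * ‖y‖ ^ 2 - ‖(inner 𝕜 v y : 𝕜)‖ ^ 2) := by
  rw [norm_add_sq (𝕜 := 𝕜), hwv, map_zero, inner_add_left, hwy, zero_add]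
  ring

theorem norm_div_norm_le_pdist_add {w v y : E} (hwv : inner 𝕜 w v = 0)
    (hwy : inner 𝕜 w y = 0) (hy : y ≠ 0) :
    ‖w‖ / ‖w + v‖ ≤ pdist 𝕜 (w + v) y := by
  have hdefect : 0 ≤ ‖v‖ ^ 2 * ‖y‖ ^ 2 - ‖(inner 𝕜 v y : 𝕜)‖ ^ 2 := by
    nlinarith [norm_inner_le_norm (𝕜 := 𝕜) v y, norm_nonneg (inner 𝕜 v y : 𝕜)]
  calc ‖w‖ / ‖w + v‖ = √((‖w‖ * ‖y‖) ^ 2) / (‖w + v‖ * ‖y‖) := by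
        rw [Real.sqrt_sq (by positivity), mul_div_mul_right _ _ (norm_ne_zero_iff.mpr hy)]
    _ ≤ pdist 𝕜 (w + v) y := by
        rw [pdist_eq_sqrt, norm_add_sq_mul_sub_norm_inner_sq hwv hwy]
        gcongr
        linarith

theorem pdist_add_eq_norm_div_norm {w v y : E} (hwv : inner 𝕜 w v = 0)
    (hwy : inner 𝕜 w y = 0) (hy : y ≠ 0) (hvy : ‖(inner 𝕜 v y : 𝕜)‖ = ‖v‖ * ‖y‖) :
    pdist 𝕜 (w + v) y = ‖w‖ / ‖w + v‖ := by
  rw [pdist_eq_sqrt, norm_add_sq_mul_sub_norm_inner_sq hwv hwy, hvy, mul_pow, sub_self,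
    add_zero, ← mul_pow, Real.sqrt_sq (by positivity),
    mul_div_mul_right _ _ (norm_ne_zero_iff.mpr hy)]

end

theorem stmt3_general {𝕜 : Type*} [RCLike 𝕜] {E : Type*} [NormedAddCommGroup E]
    [InnerProductSpace 𝕜 E]
    (V : Submodule 𝕜 E) (hV : V ≠ ⊥) (x : E)
    (w v : E) (hv : v ∈ V) (hw : ∀ y ∈ V, (inner 𝕜 w y : 𝕜) = 0)
    (hxwv : x = w + v) :
    IsLeast {d : ℝ | ∃ y ∈ V, y ≠ 0 ∧ d = pdist 𝕜 x y} (‖w‖ / ‖x‖) := by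
  subst hxwv
  have hwv := hw v hv
  refine ⟨?_, ?_⟩
  · obtain ⟨y, hyV, hy, hvy⟩ : ∃ y ∈ V, y ≠ 0 ∧ ‖(inner 𝕜 v y : 𝕜)‖ = ‖v‖ * ‖y‖ := by
      by_cases hv0 : v = 0
      · obtain ⟨y, hyV, hy⟩ := Submodule.exists_mem_ne_zero_of_ne_bot hV
        exact ⟨y, hyV, hy, by simp [hv0]⟩
      · exact ⟨v, hv, hv0, by rw [← inner_self_re_eq_norm, inner_self_eq_norm_mul_norm]⟩
    exact ⟨y, hyV, hy, (pdist_add_eq_norm_div_norm hwv (hw y hyV) hy hvy).symm⟩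
  · rintro d ⟨y, hyV, hy, rfl⟩
    exact norm_div_norm_le_pdist_add hwv (hw y hyV) hy

/-- if `x = w + v` with `w` orthogonal to a nonzero subspace `V`
and `v ∈ V`, then the minimum of `dist(x,y)` over nonzero `y ∈ V` is
`‖w‖/‖x‖`. -/
theorem stmt3 {𝕜 : Type*} [RCLike 𝕜] {E : Type*} [NormedAddCommGroup E]
    [InnerProductSpace 𝕜 E] [FiniteDimensional 𝕜 E]
    (V : Submodule 𝕜 E) (hV : V ≠ ⊥) (x : E) (hx : x ≠ 0)
    (w v : E) (hv : v ∈ V) (hw : ∀ y ∈ V, (inner 𝕜 w y : 𝕜) = 0)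
    (hxwv : x = w + v) :
    IsLeast {d : ℝ | ∃ y ∈ V, y ≠ 0 ∧ d = pdist 𝕜 x y} (‖w‖ / ‖x‖) :=
  stmt3_general V hV x w v hv hw hxwv
end

section
/- Let n ≥ m ≥ 2 and let V₁, V₂ be (m−1)-dimensional subspaces of an n-dimensional inner product space whose intersection W has dimension at least m−2. Then the projective distance between V₁ and V₂ (defined via the lines ⋀^{m−1}V₁ and ⋀^{m−1}V₂ in ⋀^{m−1}U) equals the maximum over nonzero x ∈ V₁ of dist(x, V₂). -/
/-! Choose an orthonormal family `w` of `k` vectors in `V₁ ⊓ V₂` and unit vectors `uᵢ ⊥ w` with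
`𝕜 ∙ uᵢ ⊔ span w = Vᵢ`. The Gram matrix of the bases `(uᵢ, w)` is `diag(⟪u₁, u₂⟫, 1, …, 1)`, and
`pdistT` does not depend on the chosen bases, so `dist(V₁, V₂) = √(1 - ‖⟪u₁, u₂⟫‖²)`.
On the other hand `dist(x, V₂)` is the sine of the angle between `x` and its orthogonal projection
`Px` on `V₂`. Writing `x = a • u₁ + z` with `z ∈ span w` gives `Px = a ⟪u₂, u₁⟫ • u₂ + z`, hence
`‖Px‖ ≥ ‖⟪u₁, u₂⟫‖ ‖x‖`, with equality at `x = u₁`. -/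

open scoped InnerProductSpace Matrix
open Module Submodule

lemma exists_det_ne_zero_of_span_le {K M : Type*} [Field K] [AddCommGroup M] [Module K M]
    {m : ℕ} {b b' : Fin m → M} (hb : LinearIndependent K b)
    (h : span K (Set.range b) ≤ span K (Set.range b')) :
    ∃ A : Matrix (Fin m) (Fin m) K, (b = fun i => ∑ l, A i l • b' l) ∧ A.det ≠ 0 := by
  choose c hc using fun i =>
    (mem_span_range_iff_exists_fun K).1 (h (subset_span ⟨i, rfl⟩))
  refine ⟨Matrix.of c, funext fun i => (hc i).symm, fun hdet => ?_⟩
  obtain ⟨v, hv0, hvA⟩ := Matrix.exists_vecMul_eq_zero_iff.2 hdet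
  refine hv0 (funext fun i => Fintype.linearIndependent_iff.1 hb v ?_ i)
  calc ∑ i, v i • b i = ∑ l, (∑ i, v i * c i l) • b' l := by
        simp_rw [← hc, Finset.smul_sum, smul_smul, Finset.sum_smul]
        exact Finset.sum_comm
    _ = 0 := Finset.sum_eq_zero fun l _ => by
        rw [show ∑ i, v i * c i l = 0 from congrFun hvA l, zero_smul]

section

variable {𝕜 : Type*} [RCLike 𝕜] {E : Type*} [NormedAddCommGroup E] [InnerProductSpace 𝕜 E]
  {m : ℕ}

lemma gramDet_sum_smul_left (A : Matrix (Fin m) (Fin m) 𝕜) (x y : Fin m → E) :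
    gramDet 𝕜 (fun i => ∑ l, A i l • x l) y = star A.det * gramDet 𝕜 x y := by
  have h : Matrix.of (fun i j => ⟪∑ l, A i l • x l, y j⟫_𝕜)
      = Aᴴ.transpose * Matrix.of fun i j => ⟪x i, y j⟫_𝕜 := by
    ext i j
    simp [Matrix.mul_apply, sum_inner, inner_smul_left]
  rw [gramDet, h, Matrix.det_mul, Matrix.det_transpose, Matrix.det_conjTranspose, gramDet]

lemma gramDet_sum_smul_right (B : Matrix (Fin m) (Fin m) 𝕜) (x y : Fin m → E) :
    gramDet 𝕜 x (fun j => ∑ l, B j l • y l) = B.det * gramDet 𝕜 x y := by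
  have h : Matrix.of (fun i j => ⟪x i, ∑ l, B j l • y l⟫_𝕜)
      = (Matrix.of fun i j => ⟪x i, y j⟫_𝕜) * Bᵀ := by
    ext i j
    simp [Matrix.mul_apply, inner_sum, inner_smul_right, mul_comm]
  rw [gramDet, h, Matrix.det_mul, Matrix.det_transpose, mul_comm, gramDet]

lemma re_gramDet_sum_smul_self (A : Matrix (Fin m) (Fin m) 𝕜) (x : Fin m → E) :
    RCLike.re (gramDet 𝕜 (fun i => ∑ l, A i l • x l) (fun i => ∑ l, A i l • x l))
      = ‖A.det‖ ^ 2 * RCLike.re (gramDet 𝕜 x x) := by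
  rw [gramDet_sum_smul_left, gramDet_sum_smul_right, ← mul_assoc, RCLike.star_def,
    RCLike.conj_mul, ← RCLike.ofReal_pow, RCLike.re_ofReal_mul]

lemma pdistT_sum_smul {A B : Matrix (Fin m) (Fin m) 𝕜} (hA : A.det ≠ 0) (hB : B.det ≠ 0)
    (x y : Fin m → E) :
    pdistT 𝕜 (fun i => ∑ l, A i l • x l) (fun j => ∑ l, B j l • y l) = pdistT 𝕜 x y := by
  have hAB : 0 < ‖A.det‖ * ‖B.det‖ := by positivity
  have hnum : ‖A.det‖ ^ 2 * RCLike.re (gramDet 𝕜 x x) * (‖B.det‖ ^ 2 * RCLike.re (gramDet 𝕜 y y))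
      - ‖star A.det * (B.det * gramDet 𝕜 x y)‖ ^ 2
      = (‖A.det‖ * ‖B.det‖) ^ 2 * (RCLike.re (gramDet 𝕜 x x) * RCLike.re (gramDet 𝕜 y y)
        - ‖gramDet 𝕜 x y‖ ^ 2) := by
    simp only [norm_mul, norm_star]
    ring
  rw [pdistT, wedgeNorm, wedgeNorm, re_gramDet_sum_smul_self, re_gramDet_sum_smul_self,
    gramDet_sum_smul_left, gramDet_sum_smul_right, hnum, Real.sqrt_mul (sq_nonneg _),
    Real.sqrt_sq hAB.le, Real.sqrt_mul (sq_nonneg _), Real.sqrt_mul (sq_nonneg _),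
    Real.sqrt_sq (norm_nonneg _), Real.sqrt_sq (norm_nonneg _), mul_mul_mul_comm,
    mul_div_mul_left _ _ hAB.ne']
  rfl

lemma pdistT_eq_of_span_le {x y x' y' : Fin m → E} (hx : LinearIndependent 𝕜 x)
    (hy : LinearIndependent 𝕜 y) (hxx' : span 𝕜 (Set.range x) ≤ span 𝕜 (Set.range x'))
    (hyy' : span 𝕜 (Set.range y) ≤ span 𝕜 (Set.range y')) :
    pdistT 𝕜 x y = pdistT 𝕜 x' y' := by
  obtain ⟨A, rfl, hA⟩ := exists_det_ne_zero_of_span_le hx hxx'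
  obtain ⟨B, rfl, hB⟩ := exists_det_ne_zero_of_span_le hy hyy'
  exact pdistT_sum_smul hA hB x' y'

lemma gramDet_eq_prod_of_pairwise {x y : Fin m → E}
    (h : Pairwise fun i j => ⟪x i, y j⟫_𝕜 = 0) : gramDet 𝕜 x y = ∏ i, ⟪x i, y i⟫_𝕜 := by
  rw [gramDet, ← Matrix.det_diagonal]
  congr 1
  ext i j
  rcases eq_or_ne i j with rfl | hij
  · simp
  · simp [h hij, hij]

end

section

variable {𝕜 : Type*} [RCLike 𝕜] {E : Type*} [NormedAddCommGroup E] [InnerProductSpace 𝕜 E]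

lemma pdist_eq (x y : E) :
    pdist 𝕜 x y = √(‖x‖ ^ 2 * ‖y‖ ^ 2 - ‖⟪x, y⟫_𝕜‖ ^ 2) / (‖x‖ * ‖y‖) := by
  unfold pdist wedgeNorm gramDet
  congr 2
  simp only [Matrix.det_fin_two, Matrix.of_apply, Matrix.cons_val_zero, Matrix.cons_val_one]
  rw [← inner_conj_symm y x, RCLike.mul_conj]
  simp [inner_self_eq_norm_sq_to_K]

lemma pdist_eq_sqrt_one_sub {x y : E} (hx : x ≠ 0) (hy : y ≠ 0) :
    pdist 𝕜 x y = √(1 - (‖⟪x, y⟫_𝕜‖ / (‖x‖ * ‖y‖)) ^ 2) := by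
  have hxy : 0 < ‖x‖ * ‖y‖ := by positivity
  rw [pdist_eq, ← Real.sqrt_sq hxy.le, ← Real.sqrt_div' _ (sq_nonneg _), Real.sqrt_sq hxy.le]
  congr 1
  field_simp

lemma inner_eq_inner_starProjection_of_mem (K : Submodule 𝕜 E) [K.HasOrthogonalProjection]
    (x : E) {y : E} (hy : y ∈ K) : ⟪x, y⟫_𝕜 = ⟪K.starProjection x, y⟫_𝕜 :=
  sub_eq_zero.1 (by rw [← inner_sub_left]; exact starProjection_inner_eq_zero x y hy)

lemma norm_inner_le_norm_starProjection_mul (K : Submodule 𝕜 E) [K.HasOrthogonalProjection]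
    (x : E) {y : E} (hy : y ∈ K) : ‖⟪x, y⟫_𝕜‖ ≤ ‖K.starProjection x‖ * ‖y‖ :=
  inner_eq_inner_starProjection_of_mem K x hy ▸ norm_inner_le_norm _ _

lemma exists_norm_inner_eq_norm_starProjection_mul (K : Submodule 𝕜 E)
    [K.HasOrthogonalProjection] (hK : K ≠ ⊥) (x : E) :
    ∃ y ∈ K, y ≠ 0 ∧ ‖⟪x, y⟫_𝕜‖ = ‖K.starProjection x‖ * ‖y‖ := by
  by_cases hPx : K.starProjection x = 0
  · obtain ⟨y, hy, hy0⟩ := exists_mem_ne_zero_of_ne_bot hK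
    have hle := norm_inner_le_norm_starProjection_mul K x hy
    simp only [hPx, norm_zero, zero_mul] at hle ⊢
    exact ⟨y, hy, hy0, le_antisymm hle (norm_nonneg _)⟩
  · refine ⟨K.starProjection x, starProjection_apply_mem K x, hPx, ?_⟩
    rw [inner_eq_inner_starProjection_of_mem K x (starProjection_apply_mem K x),
      inner_self_eq_norm_sq_to_K, norm_pow, RCLike.norm_ofReal, abs_norm, sq]

lemma pdistPV_eq (K : Submodule 𝕜 E) [K.HasOrthogonalProjection] (hK : K ≠ ⊥) {x : E}
    (hx : x ≠ 0) : pdistPV 𝕜 x K = √(1 - (‖K.starProjection x‖ / ‖x‖) ^ 2) := by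
  have hbdd : BddBelow {d : ℝ | ∃ y ∈ K, y ≠ 0 ∧ d = pdist 𝕜 x y} := by
    refine ⟨0, ?_⟩
    rintro _ ⟨y, -, -, rfl⟩
    unfold pdist wedgeNorm
    positivity
  obtain ⟨y₀, hy₀, hy₀0, hy₀eq⟩ := exists_norm_inner_eq_norm_starProjection_mul K hK x
  have hpdist₀ : pdist 𝕜 x y₀ = √(1 - (‖K.starProjection x‖ / ‖x‖) ^ 2) := by
    rw [pdist_eq_sqrt_one_sub hx hy₀0, hy₀eq, mul_div_mul_right _ _ (norm_ne_zero_iff.2 hy₀0)]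
  refine le_antisymm (hpdist₀ ▸ csInf_le hbdd ⟨y₀, hy₀, hy₀0, rfl⟩)
    (le_csInf ⟨_, y₀, hy₀, hy₀0, rfl⟩ ?_)
  rintro _ ⟨y, hy, hy0, rfl⟩
  rw [pdist_eq_sqrt_one_sub hx hy0]
  gcongr √(1 - ?_ ^ 2)
  rw [div_le_div_iff₀ (by positivity) (norm_pos_iff.2 hx)]
  nlinarith [norm_inner_le_norm_starProjection_mul K x hy, norm_nonneg x]

end

section

variable {𝕜 : Type*} [RCLike 𝕜] {E : Type*} [NormedAddCommGroup E] [InnerProductSpace 𝕜 E]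
  {W : Submodule 𝕜 E} {u₁ u₂ : E}

lemma norm_add_sq_of_mem_orthogonal {v z : E} (hv : v ∈ Wᗮ) (hz : z ∈ W) :
    ‖v + z‖ ^ 2 = ‖v‖ ^ 2 + ‖z‖ ^ 2 := by
  simpa only [sq] using
    norm_add_sq_eq_norm_sq_add_norm_sq_of_inner_eq_zero v z (inner_left_of_mem_orthogonal hz hv)

lemma starProjection_span_singleton_sup_apply (hu₁ : u₁ ∈ Wᗮ) (hu₂ : u₂ ∈ Wᗮ)
    (hu₂1 : ‖u₂‖ = 1) [(𝕜 ∙ u₂ ⊔ W).HasOrthogonalProjection] :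
    (𝕜 ∙ u₂ ⊔ W).starProjection u₁ = ⟪u₂, u₁⟫_𝕜 • u₂ := by
  refine eq_starProjection_of_mem_of_inner_eq_zero
    (mem_sup_left (smul_mem _ _ (mem_span_singleton_self u₂))) ?_
  rintro _ hv
  obtain ⟨_, hy, z, hz, rfl⟩ := mem_sup.1 hv
  obtain ⟨a, rfl⟩ := mem_span_singleton.1 hy
  have hz0 : ⟪u₁ - ⟪u₂, u₁⟫_𝕜 • u₂, z⟫_𝕜 = 0 :=
    inner_left_of_mem_orthogonal hz (sub_mem hu₁ (smul_mem _ _ hu₂))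
  rw [inner_add_right, hz0, add_zero, inner_smul_right, inner_sub_left, inner_smul_left,
    inner_conj_symm, inner_self_eq_norm_sq_to_K, hu₂1]
  simp

lemma norm_inner_mul_norm_le_norm_starProjection (hu₁ : u₁ ∈ Wᗮ) (hu₂ : u₂ ∈ Wᗮ)
    (hu₁1 : ‖u₁‖ = 1) (hu₂1 : ‖u₂‖ = 1) [(𝕜 ∙ u₂ ⊔ W).HasOrthogonalProjection] {x : E}
    (hx : x ∈ 𝕜 ∙ u₁ ⊔ W) : ‖⟪u₁, u₂⟫_𝕜‖ * ‖x‖ ≤ ‖(𝕜 ∙ u₂ ⊔ W).starProjection x‖ := by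
  obtain ⟨_, hy, z, hz, rfl⟩ := mem_sup.1 hx
  obtain ⟨a, rfl⟩ := mem_span_singleton.1 hy
  have hPx : (𝕜 ∙ u₂ ⊔ W).starProjection (a • u₁ + z) = (a * ⟪u₂, u₁⟫_𝕜) • u₂ + z := by
    rw [map_add, map_smul, starProjection_span_singleton_sup_apply hu₁ hu₂ hu₂1,
      starProjection_eq_self_iff.2 (mem_sup_right hz), smul_smul]
  have hg : ‖⟪u₁, u₂⟫_𝕜‖ ^ 2 ≤ 1 := pow_le_one₀ (norm_nonneg _) <| by
    simpa [hu₁1, hu₂1] using norm_inner_le_norm (𝕜 := 𝕜) u₁ u₂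
  refine (pow_le_pow_iff_left₀ (by positivity) (norm_nonneg _) two_ne_zero).1 ?_
  rw [hPx, mul_pow, norm_add_sq_of_mem_orthogonal (smul_mem _ _ hu₁) hz,
    norm_add_sq_of_mem_orthogonal (smul_mem _ _ hu₂) hz, norm_smul, norm_smul, norm_mul,
    norm_inner_symm u₂ u₁, hu₁1, hu₂1]
  nlinarith [mul_nonneg (sub_nonneg.2 hg) (sq_nonneg ‖z‖)]

lemma isGreatest_pdistPV_of_sup_eq {V₁ V₂ : Submodule 𝕜 E} [V₂.HasOrthogonalProjection]
    (hu₁ : u₁ ∈ Wᗮ) (hu₂ : u₂ ∈ Wᗮ) (hu₁1 : ‖u₁‖ = 1) (hu₂1 : ‖u₂‖ = 1)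
    (hV₁ : 𝕜 ∙ u₁ ⊔ W = V₁) (hV₂ : 𝕜 ∙ u₂ ⊔ W = V₂) :
    IsGreatest {d : ℝ | ∃ x ∈ V₁, x ≠ 0 ∧ d = pdistPV 𝕜 x V₂} √(1 - ‖⟪u₁, u₂⟫_𝕜‖ ^ 2) := by
  subst hV₁ hV₂
  have hu₁0 : u₁ ≠ 0 := norm_ne_zero_iff.1 (by rw [hu₁1]; exact one_ne_zero)
  have hu₂0 : u₂ ≠ 0 := norm_ne_zero_iff.1 (by rw [hu₂1]; exact one_ne_zero)
  have hne : 𝕜 ∙ u₂ ⊔ W ≠ ⊥ := fun h =>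
    hu₂0 ((Submodule.eq_bot_iff _).1 h u₂ (mem_sup_left (mem_span_singleton_self u₂)))
  refine ⟨⟨u₁, mem_sup_left (mem_span_singleton_self u₁), hu₁0, ?_⟩, ?_⟩
  · rw [pdistPV_eq _ hne hu₁0, starProjection_span_singleton_sup_apply hu₁ hu₂ hu₂1, hu₁1,
      div_one, norm_smul, hu₂1, mul_one, norm_inner_symm]
  · rintro _ ⟨x, hx, hx0, rfl⟩
    rw [pdistPV_eq _ hne hx0]
    gcongr √(1 - ?_ ^ 2)
    rw [le_div_iff₀ (norm_pos_iff.2 hx0)]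
    exact norm_inner_mul_norm_le_norm_starProjection hu₁ hu₂ hu₁1 hu₂1 hx

lemma exists_norm_eq_one_mem_orthogonal_sup_eq {V : Submodule 𝕜 E} [FiniteDimensional 𝕜 V]
    (hWV : W ≤ V) (hrank : finrank 𝕜 W + 1 = finrank 𝕜 V) :
    ∃ u : E, ‖u‖ = 1 ∧ u ∈ Wᗮ ∧ 𝕜 ∙ u ⊔ W = V := by
  have : FiniteDimensional 𝕜 W := finiteDimensional_of_le hWV
  have hrank₁ : finrank 𝕜 (Wᗮ ⊓ V : Submodule 𝕜 E) = 1 :=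
    finrank_add_inf_finrank_orthogonal' hWV hrank
  obtain ⟨v, hv, hv0⟩ := exists_mem_ne_zero_of_ne_bot (p := Wᗮ ⊓ V) fun h => by
    rw [h, finrank_bot] at hrank₁; exact zero_ne_one hrank₁
  have hu : (‖v‖⁻¹ : 𝕜) • v ∈ Wᗮ ⊓ V := smul_mem _ _ hv
  have hu0 : (‖v‖⁻¹ : 𝕜) • v ≠ 0 :=
    norm_ne_zero_iff.1 (by rw [norm_smul_inv_norm hv0]; exact one_ne_zero)
  have hline : 𝕜 ∙ (‖v‖⁻¹ : 𝕜) • v = Wᗮ ⊓ V :=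
    eq_of_le_of_finrank_eq ((span_singleton_le_iff_mem _ _).2 hu)
      (by rw [finrank_span_singleton hu0, hrank₁])
  refine ⟨_, norm_smul_inv_norm hv0, (mem_inf.1 hu).1, ?_⟩
  rw [hline, sup_comm, sup_orthogonal_inf_of_hasOrthogonalProjection hWV]

end

section

variable {𝕜 : Type*} [RCLike 𝕜] {E : Type*} [NormedAddCommGroup E] [InnerProductSpace 𝕜 E]
  {k : ℕ} {w : Fin k → E} {u₁ u₂ : E}

lemma gramDet_cons (hw : Orthonormal 𝕜 w) (hu₁ : u₁ ∈ (span 𝕜 (Set.range w))ᗮ)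
    (hu₂ : u₂ ∈ (span 𝕜 (Set.range w))ᗮ) :
    gramDet 𝕜 (Fin.cons u₁ w : Fin (k + 1) → E) (Fin.cons u₂ w) = ⟪u₁, u₂⟫_𝕜 := by
  have hpair : Pairwise fun i j =>
      ⟪(Fin.cons u₁ w : Fin (k + 1) → E) i, (Fin.cons u₂ w : Fin (k + 1) → E) j⟫_𝕜 = 0 := by
    intro i j hij
    induction i using Fin.cases with
    | zero =>
      induction j using Fin.cases with
      | zero => exact absurd rfl hij
      | succ j => exact inner_left_of_mem_orthogonal (subset_span (Set.mem_range_self j)) hu₁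
    | succ i =>
      induction j using Fin.cases with
      | zero => exact inner_right_of_mem_orthogonal (subset_span (Set.mem_range_self i)) hu₂
      | succ j => exact hw.2 fun h => hij (congrArg Fin.succ h)
  rw [gramDet_eq_prod_of_pairwise hpair, Fin.prod_univ_succ]
  simp [inner_self_eq_norm_sq_to_K, hw.1]

lemma pdistT_cons (hw : Orthonormal 𝕜 w) (hu₁ : u₁ ∈ (span 𝕜 (Set.range w))ᗮ)
    (hu₂ : u₂ ∈ (span 𝕜 (Set.range w))ᗮ) (hu₁1 : ‖u₁‖ = 1) (hu₂1 : ‖u₂‖ = 1) :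
    pdistT 𝕜 (Fin.cons u₁ w : Fin (k + 1) → E) (Fin.cons u₂ w) = √(1 - ‖⟪u₁, u₂⟫_𝕜‖ ^ 2) := by
  simp [pdistT, wedgeNorm, gramDet_cons hw, hu₁, hu₂, inner_self_eq_norm_sq_to_K, hu₁1, hu₂1]

lemma exists_orthonormal_mem (K : Submodule 𝕜 E) [FiniteDimensional 𝕜 K]
    (h : k ≤ finrank 𝕜 K) : ∃ w : Fin k → E, Orthonormal 𝕜 w ∧ ∀ j, w j ∈ K :=
  ⟨fun j => (stdOrthonormalBasis 𝕜 K (Fin.castLE h j) : E),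
    ((stdOrthonormalBasis 𝕜 K).orthonormal.comp _ (Fin.castLE_injective h)).comp_linearIsometry
      K.subtypeₗᵢ,
    fun j => (stdOrthonormalBasis 𝕜 K (Fin.castLE h j)).2⟩

end

/-- Here `m = k + 2`, so the subspaces `Vᵢ` have dimension `m - 1 = k + 1`. -/
theorem stmt5_general {𝕜 : Type*} [RCLike 𝕜] {E : Type*} [NormedAddCommGroup E]
    [InnerProductSpace 𝕜 E] {k : ℕ}
    (V₁ V₂ : Submodule 𝕜 E)
    (h₁ : Module.finrank 𝕜 V₁ = k + 1) (h₂ : Module.finrank 𝕜 V₂ = k + 1)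
    (hW : k ≤ Module.finrank 𝕜 (V₁ ⊓ V₂ : Submodule 𝕜 E))
    (b₁ b₂ : Fin (k + 1) → E)
    (hb₁ : LinearIndependent 𝕜 b₁) (hb₁s : Submodule.span 𝕜 (Set.range b₁) = V₁)
    (hb₂ : LinearIndependent 𝕜 b₂) (hb₂s : Submodule.span 𝕜 (Set.range b₂) = V₂) :
    IsGreatest {d : ℝ | ∃ x ∈ V₁, x ≠ 0 ∧ d = pdistPV 𝕜 x V₂} (pdistT 𝕜 b₁ b₂) := by
  have : FiniteDimensional 𝕜 V₁ := Module.finite_of_finrank_eq_succ h₁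
  have : FiniteDimensional 𝕜 V₂ := Module.finite_of_finrank_eq_succ h₂
  obtain ⟨w, hw, hwV⟩ := exists_orthonormal_mem (V₁ ⊓ V₂) hW
  set W := span 𝕜 (Set.range w)
  have hWV : W ≤ V₁ ⊓ V₂ := span_le.2 (Set.range_subset_iff.2 hwV)
  have hWk : finrank 𝕜 W = k := by
    rw [finrank_span_eq_card hw.linearIndependent, Fintype.card_fin]
  obtain ⟨u₁, hu₁1, hu₁, hV₁⟩ :=
    exists_norm_eq_one_mem_orthogonal_sup_eq (hWV.trans inf_le_left) (by rw [hWk, h₁])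
  obtain ⟨u₂, hu₂1, hu₂, hV₂⟩ :=
    exists_norm_eq_one_mem_orthogonal_sup_eq (hWV.trans inf_le_right) (by rw [hWk, h₂])
  have hspan (u : E) : span 𝕜 (Set.range (Fin.cons u w : Fin (k + 1) → E)) = 𝕜 ∙ u ⊔ W := by
    rw [Fin.range_cons, span_insert]
  rw [pdistT_eq_of_span_le hb₁ hb₂ (hb₁s.trans (hV₁.symm.trans (hspan u₁).symm)).le
    (hb₂s.trans (hV₂.symm.trans (hspan u₂).symm)).le, pdistT_cons hw hu₁ hu₂ hu₁1 hu₂1]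
  exact isGreatest_pdistPV_of_sup_eq hu₁ hu₂ hu₁1 hu₂1 hV₁ hV₂

/-- for `(m−1)`-dimensional subspaces `V₁, V₂` of an
`n`-dimensional inner product space (here `m = k+2`, so `dim Vᵢ = k+1` and
`n ≥ k+2`) whose intersection has dimension at least `m−2 = k`, the projective
distance `dist(V₁,V₂)` — computed via bases `b₁`, `b₂` of `V₁`, `V₂` as the
distance between the lines `⋀^{m−1}V₁` and `⋀^{m−1}V₂` — is the maximum of
`dist(x, V₂)` over nonzero `x ∈ V₁`. -/
theorem stmt5 {𝕜 : Type*} [RCLike 𝕜] {E : Type*} [NormedAddCommGroup E]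
    [InnerProductSpace 𝕜 E] [FiniteDimensional 𝕜 E] {k : ℕ}
    (hn : k + 2 ≤ Module.finrank 𝕜 E)
    (V₁ V₂ : Submodule 𝕜 E)
    (h₁ : Module.finrank 𝕜 V₁ = k + 1) (h₂ : Module.finrank 𝕜 V₂ = k + 1)
    (hW : k ≤ Module.finrank 𝕜 (V₁ ⊓ V₂ : Submodule 𝕜 E))
    (b₁ b₂ : Fin (k + 1) → E)
    (hb₁ : LinearIndependent 𝕜 b₁) (hb₁s : Submodule.span 𝕜 (Set.range b₁) = V₁)
    (hb₂ : LinearIndependent 𝕜 b₂) (hb₂s : Submodule.span 𝕜 (Set.range b₂) = V₂) :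
    IsGreatest {d : ℝ | ∃ x ∈ V₁, x ≠ 0 ∧ d = pdistPV 𝕜 x V₂} (pdistT 𝕜 b₁ b₂) :=
  stmt5_general V₁ V₂ h₁ h₂ hW b₁ b₂ hb₁ hb₁s hb₂ hb₂s
end

section
/- Let (x₁,...,xₘ) be a sequence of linearly independent vectors in Lⁿ (L = ℝ or ℂ) satisfying dist(xⱼ, span(x₁,...,x_{j−1})) ≥ 1 − 1/2^{j−1} for 2 ≤ j ≤ m. Then e^{−2} ‖x₁‖⋯‖xₘ‖ ≤ ‖x₁ ∧ ⋯ ∧ xₘ‖ ≤ ‖x₁‖⋯‖xₘ‖. -/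
/-- The span of the vectors `x i` with `i < j`. -/
noncomputable def earlierSpan {𝕜 : Type*} [RCLike 𝕜] {E : Type*} [NormedAddCommGroup E]
    [InnerProductSpace 𝕜 E] {m : ℕ} (x : Fin m → E) (j : Fin m) : Submodule 𝕜 E :=
  Submodule.span 𝕜 {v : E | ∃ i : Fin m, i < j ∧ v = x i}

/-- A sequence `(x₁,…,xₘ)` is almost orthogonal if it is linearly independent
and `dist(xⱼ, ⟨x₁,…,x_{j−1}⟩) ≥ 1 − 1/2^{j−1}` for `2 ≤ j ≤ m`.
(Here the index `j : Fin m` is `0`-based, so the condition reads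
`1 − (1/2)^j ≤ dist(x j, span (x i, i < j))` for `j ≥ 1`.) -/
def AlmostOrthogonal (𝕜 : Type*) [RCLike 𝕜] {E : Type*} [NormedAddCommGroup E]
    [InnerProductSpace 𝕜 E] {m : ℕ} (x : Fin m → E) : Prop :=
  LinearIndependent 𝕜 x ∧
    ∀ j : Fin m, 0 < (j : ℕ) →
      1 - (1 / 2 : ℝ) ^ (j : ℕ) ≤ pdistPV 𝕜 (x j) (earlierSpan x j)

/-!
The Gram determinant of `x` equals that of its Gram–Schmidt orthogonalisation `g`, because the
change of basis is unitriangular; hence `‖x₁ ∧ ⋯ ∧ xₘ‖ = ∏ ‖gⱼ‖`. Writing `xⱼ = pⱼ + gⱼ` with `pⱼ`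
in the span of the earlier vectors and `gⱼ` orthogonal to it, we get `‖gⱼ‖ ≤ ‖xⱼ‖` and
`‖gⱼ‖ / ‖xⱼ‖ = dist(xⱼ, pⱼ) ≥ dist(xⱼ, span(x₁,…,x_{j−1}))`. The lower bound then follows from
`∏ⱼ (1 − 2⁻ʲ) ≥ exp (−2 ∑ⱼ 2⁻ʲ) ≥ e⁻²`, since `1 − t ≥ e^{−2t}` for `0 ≤ t ≤ 1/2`.
-/

open Finset InnerProductSpace Matrix

theorem Real.exp_neg_two_mul_le_one_sub {t : ℝ} (ht₀ : 0 ≤ t) (ht : t ≤ 1 / 2) :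
    Real.exp (-(2 * t)) ≤ 1 - t := by
  rw [Real.exp_neg, inv_le_iff_one_le_mul₀ (Real.exp_pos _)]
  nlinarith [Real.add_one_le_exp (2 * t)]

theorem Real.exp_neg_two_le_prod_one_sub_half_pow (k : ℕ) :
    Real.exp (-2) ≤ ∏ i ∈ range k, (1 - (1 / 2 : ℝ) ^ (i + 1)) := by
  have hsum : ∑ i ∈ range k, (1 / 2 : ℝ) ^ (i + 1) ≤ 1 := by
    simp_rw [pow_succ, ← sum_mul]
    linarith [sum_geometric_two_le k]
  calc Real.exp (-2) ≤ Real.exp (-(2 * ∑ i ∈ range k, (1 / 2 : ℝ) ^ (i + 1))) := by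
        gcongr; linarith
    _ = ∏ i ∈ range k, Real.exp (-(2 * (1 / 2 : ℝ) ^ (i + 1))) := by
        rw [← Real.exp_sum, mul_sum, ← sum_neg_distrib]
    _ ≤ ∏ i ∈ range k, (1 - (1 / 2 : ℝ) ^ (i + 1)) := by
        gcongr with i
        exact Real.exp_neg_two_mul_le_one_sub (by positivity)
          (pow_le_pow_of_le_one (by norm_num) (by norm_num) (by omega) |>.trans_eq (pow_one _))

theorem exp_neg_two_mul_prod_le_prod {m : ℕ} {a b : Fin m → ℝ} (ha : ∀ j, 0 ≤ a j)
    (h₀ : ∀ j : Fin m, (j : ℕ) = 0 → a j ≤ b j)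
    (hb : ∀ j : Fin m, 0 < (j : ℕ) → (1 - (1 / 2 : ℝ) ^ (j : ℕ)) * a j ≤ b j) :
    Real.exp (-2) * ∏ j, a j ≤ ∏ j, b j := by
  cases m with
  | zero => simp
  | succ k =>
    have hc : ∀ i : Fin k, 0 ≤ 1 - (1 / 2 : ℝ) ^ ((i : ℕ) + 1) := fun i =>
      sub_nonneg.2 (pow_le_one₀ (by norm_num) (by norm_num))
    rw [Fin.prod_univ_succ, Fin.prod_univ_succ]
    calc Real.exp (-2) * (a 0 * ∏ i : Fin k, a i.succ)
        = a 0 * (Real.exp (-2) * ∏ i : Fin k, a i.succ) := by ring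
      _ ≤ b 0 * ∏ i : Fin k, ((1 - (1 / 2 : ℝ) ^ ((i : ℕ) + 1)) * a i.succ) := by
        rw [prod_mul_distrib, Fin.prod_univ_eq_prod_range (fun i => 1 - (1 / 2 : ℝ) ^ (i + 1))]
        exact mul_le_mul (h₀ 0 rfl) (mul_le_mul_of_nonneg_right
          (Real.exp_neg_two_le_prod_one_sub_half_pow k) (prod_nonneg fun i _ => ha _))
          (mul_nonneg (Real.exp_pos _).le (prod_nonneg fun i _ => ha _)) ((ha 0).trans (h₀ 0 rfl))
      _ ≤ b 0 * ∏ i : Fin k, b i.succ :=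
        mul_le_mul_of_nonneg_left (prod_le_prod (fun i _ => mul_nonneg (hc i) (ha _))
          fun i _ => hb i.succ i.succ_pos) ((ha 0).trans (h₀ 0 rfl))

section

variable {𝕜 E : Type*} [RCLike 𝕜] [NormedAddCommGroup E] [InnerProductSpace 𝕜 E]

theorem Matrix.gram_sum_smul {ι κ : Type*} [Fintype ι] (v : ι → E) (B : Matrix ι κ 𝕜) :
    gram 𝕜 (fun j => ∑ i, B i j • v i) = Bᴴ * gram 𝕜 v * B := by
  ext j k
  simp only [gram_apply, sum_inner, inner_sum, inner_smul_left, inner_smul_right, mul_apply,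
    conjTranspose_apply, sum_mul, mul_sum, RCLike.star_def]
  refine sum_congr rfl fun l _ => sum_congr rfl fun i _ => by ring

theorem wedgeNorm_pair (x y : E) :
    wedgeNorm 𝕜 ![x, y] = √(‖x‖ ^ 2 * ‖y‖ ^ 2 - ‖(inner 𝕜 x y : 𝕜)‖ ^ 2) := by
  rw [wedgeNorm, gramDet, det_fin_two]
  simp only [of_apply, Matrix.cons_val_zero, Matrix.cons_val_one, inner_self_eq_norm_sq_to_K]
  rw [← inner_conj_symm x y, RCLike.conj_mul, RCLike.norm_conj]
  norm_cast

theorem pdist_add_left_of_inner_eq_zero {P g : E} (hPg : inner 𝕜 P g = (0 : 𝕜)) (hP : P ≠ 0) :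
    pdist 𝕜 (P + g) P = ‖g‖ / ‖P + g‖ := by
  have hpyth : ‖P + g‖ ^ 2 = ‖P‖ ^ 2 + ‖g‖ ^ 2 := by
    simpa [sq] using norm_add_sq_eq_norm_sq_add_norm_sq_of_inner_eq_zero P g hPg
  have hinner : inner 𝕜 (P + g) P = ((‖P‖ ^ 2 : ℝ) : 𝕜) := by
    rw [inner_add_left, inner_eq_zero_symm.1 hPg, add_zero, inner_self_eq_norm_sq_to_K]
    norm_cast
  rw [pdist, wedgeNorm_pair, hinner, RCLike.norm_ofReal, hpyth,
    show (‖P‖ ^ 2 + ‖g‖ ^ 2) * ‖P‖ ^ 2 - |‖P‖ ^ 2| ^ 2 = (‖P‖ * ‖g‖) ^ 2 by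
      rw [abs_of_nonneg (by positivity)]; ring,
    Real.sqrt_sq (by positivity), mul_comm ‖P + g‖, mul_div_mul_left _ _ (norm_ne_zero_iff.2 hP)]

theorem mul_norm_le_norm_of_le_pdistPV {V : Submodule 𝕜 E} {x g : E} (hxg : x - g ∈ V)
    (hg : g ∈ Vᗮ) {c : ℝ} (hc : c ≤ pdistPV 𝕜 x V) (hc₁ : c ≤ 1) : c * ‖x‖ ≤ ‖g‖ := by
  rcases eq_or_ne x 0 with rfl | hx₀
  · simp
  set P := x - g
  have hx : x = P + g := (sub_add_cancel x g).symm
  by_cases hP : P = 0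
  · rw [hx, hP, zero_add]
    exact mul_le_of_le_one_left (norm_nonneg g) hc₁
  have hPg : inner 𝕜 P g = (0 : 𝕜) := Submodule.inner_right_of_mem_orthogonal hxg hg
  have hdist : pdistPV 𝕜 x V ≤ ‖g‖ / ‖x‖ := by
    rw [hx, ← pdist_add_left_of_inner_eq_zero hPg hP]
    refine csInf_le ⟨0, ?_⟩ ⟨P, hxg, hP, rfl⟩
    rintro _ ⟨y, -, -, rfl⟩
    exact div_nonneg (Real.sqrt_nonneg _) (by positivity)
  rw [← le_div_iff₀ (norm_pos_iff.2 hx₀)]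
  exact hc.trans hdist

variable {ι : Type*} [LinearOrder ι] [LocallyFiniteOrderBot ι] [WellFoundedLT ι]

theorem gram_gramSchmidt [DecidableEq ι] (f : ι → E) :
    gram 𝕜 (gramSchmidt 𝕜 f) = diagonal fun i => (‖gramSchmidt 𝕜 f i‖ : 𝕜) ^ 2 := by
  ext i j
  rw [gram_apply, diagonal_apply]
  split_ifs with h
  · rw [h, inner_self_eq_norm_sq_to_K]
  · exact gramSchmidt_orthogonal 𝕜 f h

theorem exists_upperUnitriangular_sum_smul_gramSchmidt [Fintype ι] (f : ι → E) :
    ∃ B : Matrix ι ι 𝕜, B.IsUpperTriangular ∧ (∀ i, B i i = 1) ∧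
      ∀ j, f j = ∑ i, B i j • gramSchmidt 𝕜 f i := by
  classical
  refine ⟨1 + of fun i j => if i < j then
    inner 𝕜 (gramSchmidt 𝕜 f i) (f j) / (‖gramSchmidt 𝕜 f i‖ : 𝕜) ^ 2 else 0, ?_, ?_, ?_⟩
  · intro i j (hji : j < i)
    rw [Matrix.add_apply, one_apply_ne (ne_of_gt hji), of_apply, if_neg (not_lt_of_gt hji),
      add_zero]
  · simp
  · intro j
    conv_lhs => rw [gramSchmidt_def'' 𝕜 f j]
    simp [add_smul, sum_add_distrib, ite_smul, sum_ite, one_apply, filter_gt_eq_Iio]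

theorem det_gram_eq_prod_norm_gramSchmidt_sq [Fintype ι] [DecidableEq ι] (f : ι → E) :
    (gram 𝕜 f).det = ∏ i, (‖gramSchmidt 𝕜 f i‖ : 𝕜) ^ 2 := by
  obtain ⟨B, hB, hdiag, hf⟩ := exists_upperUnitriangular_sum_smul_gramSchmidt (𝕜 := 𝕜) f
  have hdetB : B.det = 1 := by simp [det_of_isUpperTriangular hB, hdiag]
  have hgram : gram 𝕜 f = Bᴴ * gram 𝕜 (gramSchmidt 𝕜 f) * B := by
    rw [← gram_sum_smul, ← funext hf]
  rw [hgram, det_mul, det_mul, det_conjTranspose, hdetB, gram_gramSchmidt, det_diagonal]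
  simp

theorem sub_gramSchmidt_mem_span_Iio (f : ι → E) (j : ι) :
    f j - gramSchmidt 𝕜 f j ∈ Submodule.span 𝕜 (f '' Set.Iio j) := by
  rw [← span_gramSchmidt_Iio, gramSchmidt_def 𝕜 f j, sub_sub_cancel]
  refine Submodule.sum_mem _ fun i hi => Submodule.span_mono ?_
    ((𝕜 ∙ gramSchmidt 𝕜 f i).starProjection_apply_mem (f j))
  exact Set.singleton_subset_iff.2 (Set.mem_image_of_mem _ (by simpa using hi))

theorem gramSchmidt_mem_orthogonal_span_Iio (f : ι → E) (j : ι) :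
    gramSchmidt 𝕜 f j ∈ (Submodule.span 𝕜 (f '' Set.Iio j))ᗮ := by
  refine (Submodule.isOrtho_span.2 ?_).ge (Submodule.mem_span_singleton_self _)
  rintro _ ⟨i, hi, rfl⟩ _ rfl
  exact inner_eq_zero_symm.1 (gramSchmidt_inv_triangular 𝕜 f hi)

theorem norm_gramSchmidt_le (f : ι → E) (j : ι) : ‖gramSchmidt 𝕜 f j‖ ≤ ‖f j‖ := by
  have hPg : inner 𝕜 (f j - gramSchmidt 𝕜 f j) (gramSchmidt 𝕜 f j) = (0 : 𝕜) :=
    Submodule.inner_right_of_mem_orthogonal (sub_gramSchmidt_mem_span_Iio f j)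
      (gramSchmidt_mem_orthogonal_span_Iio f j)
  have hpyth := norm_add_sq_eq_norm_sq_add_norm_sq_of_inner_eq_zero _ _ hPg
  rw [sub_add_cancel] at hpyth
  rw [mul_self_le_mul_self_iff (norm_nonneg _) (norm_nonneg _), hpyth]
  exact le_add_of_nonneg_left (mul_self_nonneg _)

theorem gramSchmidt_of_isMin (f : ι → E) {j : ι} (hj : IsMin j) : gramSchmidt 𝕜 f j = f j := by
  simp [gramSchmidt_def 𝕜 f j, hj.finsetIio_eq]

variable {m : ℕ}

theorem wedgeNorm_eq_prod_norm_gramSchmidt (x : Fin m → E) :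
    wedgeNorm 𝕜 x = ∏ i, ‖gramSchmidt 𝕜 x i‖ := by
  rw [wedgeNorm, gramDet, ← gram, det_gram_eq_prod_norm_gramSchmidt_sq]
  norm_cast
  rw [prod_pow, Real.sqrt_sq (prod_nonneg fun i _ => norm_nonneg _)]

theorem earlierSpan_eq_span_image (x : Fin m → E) (j : Fin m) :
    earlierSpan (𝕜 := 𝕜) x j = Submodule.span 𝕜 (x '' Set.Iio j) := by
  rw [earlierSpan]
  congr 1
  ext v
  simp [eq_comm]

theorem AlmostOrthogonal.one_sub_half_pow_mul_norm_le {x : Fin m → E} (hx : AlmostOrthogonal 𝕜 x)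
    {j : Fin m} (hj : 0 < (j : ℕ)) : (1 - (1 / 2 : ℝ) ^ (j : ℕ)) * ‖x j‖ ≤ ‖gramSchmidt 𝕜 x j‖ := by
  have hdist := hx.2 j hj
  rw [earlierSpan_eq_span_image] at hdist
  exact mul_norm_le_norm_of_le_pdistPV (sub_gramSchmidt_mem_span_Iio x j)
    (gramSchmidt_mem_orthogonal_span_Iio x j) hdist (sub_le_self _ (by positivity))

end

/-- an almost orthogonal sequence in `Lⁿ` (`L = ℝ` or `ℂ`)
satisfies `e⁻² ‖x₁‖⋯‖xₘ‖ ≤ ‖x₁ ∧ ⋯ ∧ xₘ‖ ≤ ‖x₁‖⋯‖xₘ‖`. -/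
theorem stmt10 {𝕜 : Type*} [RCLike 𝕜] {n m : ℕ}
    (x : Fin m → EuclideanSpace 𝕜 (Fin n)) (hx : AlmostOrthogonal 𝕜 x) :
    Real.exp (-2) * ∏ i, ‖x i‖ ≤ wedgeNorm 𝕜 x ∧
      wedgeNorm 𝕜 x ≤ ∏ i, ‖x i‖ := by
  have hfirst (j : Fin m) (hj : (j : ℕ) = 0) : gramSchmidt 𝕜 x j = x j :=
    gramSchmidt_of_isMin x fun i _ => by simp [Fin.le_def, hj]
  rw [wedgeNorm_eq_prod_norm_gramSchmidt]
  exact ⟨exp_neg_two_mul_prod_le_prod (fun j => norm_nonneg _)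
      (fun j hj => by rw [hfirst j hj]) fun j hj => hx.one_sub_half_pow_mul_norm_le hj,
    prod_le_prod (fun _ _ => norm_nonneg _) fun j _ => norm_gramSchmidt_le x j⟩
end
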